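/- Let ρ be a congruence on the monoid M presented by ⟨x, y, e | e³ = e, xey = y, xe²y = x, xy = 1⟩. If y ρ 1, then ρ is the universal congruence M × M. -/
import Mathlib


/-- The alphabet `A = {x, y, e}`. -/
inductive Alpha : Type
  | x | y | e
  deriving DecidableEq

/-- The defining relations `e³ = e`, `xey = y`, `xe²y = x`, `xy = 1`. -/
def rel : FreeMonoid Alpha → FreeMonoid Alpha → Prop := fun a b =>
  (a = .of .e * .of .e * .of .e ∧ b = .of .e) ∨
  (a = .of .x * .of .e * .of .y ∧ b = .of .y) ∨
  (a = .of .x * .of .e * .of .e * .of .y ∧ b = .of .x) ∨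
  (a = .of .x * .of .y ∧ b = 1)

/-- The monoid `M = ⟨x, y, e | e³ = e, xey = y, xe²y = x, xy = 1⟩`. -/
abbrev M := PresentedMonoid rel

/-- The image of `x` in `M`. -/
def X : M := PresentedMonoid.of rel .x
/-- The image of `y` in `M`. -/
def Y : M := PresentedMonoid.of rel .y
/-- The image of `e` in `M`. -/
def E : M := PresentedMonoid.of rel .e

lemma XY_eq : X * Y = 1 :=
  Con.eq _ |>.mpr (ConGen.Rel.of _ _ (Or.inr (Or.inr (Or.inr ⟨rfl, rfl⟩))))

lemma XEY_eq : X * E * Y = Y :=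
  Con.eq _ |>.mpr (ConGen.Rel.of _ _ (Or.inr (Or.inl ⟨rfl, rfl⟩)))

/-- If a congruence on `M` relates `y` and `1`, it is universal. -/
theorem stmt_15 : ∀ ρ : Con M, ρ Y 1 → ρ = ⊤ := by
  intro ρ hy
  -- x ρ 1
  have hx : ρ X 1 := by
    have := ρ.mul (ρ.refl X) hy
    rw [XY_eq, mul_one] at this
    exact ρ.symm this
  -- e ρ 1
  have he : ρ E 1 := by
    have h1 : ρ (X * E * Y) (X * E) := by
      have := ρ.mul (ρ.refl (X * E)) hy
      rwa [mul_one] at this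
    rw [XEY_eq] at h1
    have h2 : ρ (X * E) E := by
      have := ρ.mul hx (ρ.refl E)
      rwa [one_mul] at this
    exact ρ.symm (ρ.trans (ρ.symm hy) (ρ.trans h1 h2))
  -- every element is related to 1
  have key : ∀ a : M, ρ a 1 := by
    intro a
    have hmem : a ∈ Submonoid.closure (Set.range (PresentedMonoid.of rel)) := by
      rw [PresentedMonoid.closure_range_of]; trivial
    refine Submonoid.closure_induction ?_ (ρ.refl 1) ?_ hmem
    · rintro _ ⟨c, rfl⟩
      cases c
      · exact hx
      · exact hy
      · exact he
    · intro a b _ _ ha hb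
      have := ρ.mul ha hb
      rwa [one_mul] at this
  ext a b
  exact ⟨fun _ => trivial, fun _ => ρ.trans (key a) (ρ.symm (key b))⟩
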